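/- Let Q be a finite poset and, for n ≥ 1, let N(Q)(n) be the set of syntax trees on Q with n leaves in which, for every internal node labeled a, any internal left child is labeled by an element incomparable with a and any internal right child is labeled either by a itself or by an element incomparable with a. Define s_Q recursively by sending the single leaf to the single leaf, and sending a tree of N(Q) with root labeled a — written uniquely as the maximal right comb of a-labeled nodes with subtrees s₁, …, s_ℓ (ℓ ≥ 2), each s_i being a leaf or having root label incomparable with a — to the tree whose root is an internal node labeled a with the ℓ children s_Q(s₁), …, s_Q(s_ℓ). Then for every n ≥ 1, s_Q is a bijection from N(Q)(n) onto the set of Q-alternating Schröder trees with n leaves. -/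

import Mathlib

open scoped Classical

/-- Syntax trees on `Q`: planar binary trees whose internal nodes are labeled by
elements of `Q`. -/
inductive STree (Q : Type*) where
  | leaf : STree Q
  | node : Q → STree Q → STree Q → STree Q

/-- The label of the root of a syntax tree, `none` for a leaf. -/
def STree.rootLabel {Q : Type*} : STree Q → Option Q
  | .leaf => none
  | .node a _ _ => some a

/-- The number of leaves of a syntax tree. -/
def STree.numLeaves {Q : Type*} : STree Q → ℕ
  | .leaf => 1
  | .node _ l r => l.numLeaves + r.numLeaves

/-- The trees of `N(Q)`: at every internal node labeled `a`, any internal left child is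
labeled by an element incomparable with `a` and any internal right child is labeled by
`a` itself or by an element incomparable with `a`. -/
def NormalShape {Q : Type*} [PartialOrder Q] : STree Q → Prop
  | .leaf => True
  | .node a l r => NormalShape l ∧ NormalShape r ∧
      (∀ b : Q, l.rootLabel = some b → ¬ a ≤ b ∧ ¬ b ≤ a) ∧
      (∀ b : Q, r.rootLabel = some b → b = a ∨ (¬ a ≤ b ∧ ¬ b ≤ a))

/-- Planar rooted trees with internal nodes labeled by `Q` and an arbitrary (finite)
list of children.  `Q`-Schröder trees are those satisfying `SchWF` below. -/
inductive SchTree (Q : Type*) where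
  | leaf : SchTree Q
  | node : Q → List (SchTree Q) → SchTree Q

/-- Well-formedness for `Q`-Schröder trees: every internal node has at least two
children. -/
inductive SchWF {Q : Type*} : SchTree Q → Prop
  | leaf : SchWF .leaf
  | node (a : Q) (ts : List (SchTree Q)) :
      2 ≤ ts.length → (∀ t ∈ ts, SchWF t) → SchWF (.node a ts)

/-- A tree is `Q`-alternating if whenever an internal node labeled `a` has an
internal-node child labeled `b`, the elements `a` and `b` are incomparable in `Q`. -/
inductive Alt {Q : Type*} [PartialOrder Q] : SchTree Q → Prop
  | leaf : Alt .leaf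
  | node (a : Q) (ts : List (SchTree Q)) :
      (∀ t ∈ ts, Alt t) →
      (∀ (b : Q) (cs : List (SchTree Q)), SchTree.node b cs ∈ ts → ¬ a ≤ b ∧ ¬ b ≤ a) →
      Alt (.node a ts)

mutual
  /-- The number of leaves of a Schröder tree. -/
  def schLeaves {Q : Type*} : SchTree Q → ℕ
    | .leaf => 1
    | .node _ ts => schLeavesList ts

  /-- Total number of leaves of a list of Schröder trees. -/
  def schLeavesList {Q : Type*} : List (SchTree Q) → ℕ
    | [] => 0
    | t :: ts => schLeaves t + schLeavesList ts
end

mutual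
  /-- The map `s_Q` sending a syntax tree to a Schröder tree: a tree with root label `a`
  is written as the maximal right comb of `a`-labeled nodes with subtrees
  `s₁, …, s_ℓ`, and is sent to the corolla-like node labeled `a` with children
  `s_Q(s₁), …, s_Q(s_ℓ)`. -/
  noncomputable def sQ {Q : Type*} [DecidableEq Q] : STree Q → SchTree Q
    | .leaf => .leaf
    | .node a l r => .node a (sQ l :: comb a r)

  /-- The list of images of the subtrees hanging from the maximal right comb of
  `a`-labeled nodes. -/
  noncomputable def comb {Q : Type*} [DecidableEq Q] (a : Q) : STree Q → List (SchTree Q)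
    | .leaf => [.leaf]
    | .node b l r =>
        if b = a then sQ l :: comb a r else [.node b (sQ l :: comb b r)]
end

/-!
The inverse of `sQ` reads each node `a` with children `t₁, …, t_ℓ` back as the right comb
`a(t₁, a(t₂, … a(t_{ℓ-1}, t_ℓ)))`. The two maps are mutually inverse on the relevant sets:
the alternating condition guarantees that no child of an `a`-node is itself labeled `a`, so
the comb read back is exactly the maximal one, and incomparability of labels along the comb
is precisely the normal-form condition on left and right children.
-/

section Inverse

variable {Q : Type*}

namespace SchTree

def rootLabel : SchTree Q → Option Q
  | leaf => none
  | node a _ => some a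

theorem rootLabel_eq_some {s : SchTree Q} {b : Q} :
    s.rootLabel = some b ↔ ∃ cs, s = node b cs := by
  cases s <;> simp [rootLabel]

end SchTree

mutual
  noncomputable def sQInv : SchTree Q → STree Q
    | .leaf => .leaf
    | .node a ts => uncomb a ts

  noncomputable def uncomb (a : Q) : List (SchTree Q) → STree Q
    | [] => .leaf
    | [t] => sQInv t
    | t :: ts => .node a (sQInv t) (uncomb a ts)
end

theorem uncomb_cons (a : Q) (t : SchTree Q) {ts : List (SchTree Q)} (h : ts ≠ []) :
    uncomb a (t :: ts) = .node a (sQInv t) (uncomb a ts) := by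
  cases ts with
  | nil => exact absurd rfl h
  | cons => rfl

theorem rootLabel_sQInv {s : SchTree Q} (hs : SchWF s) :
    (sQInv s).rootLabel = s.rootLabel := by
  cases hs with
  | leaf => rfl
  | node a ts hlen _ =>
    match ts, hlen with
    | _ :: _ :: _, _ => rfl

theorem rootLabel_uncomb {a b : Q} {ts : List (SchTree Q)}
    (hw : ∀ t ∈ ts, SchWF t) (h : (uncomb a ts).rootLabel = some b) :
    b = a ∨ ∃ t ∈ ts, t.rootLabel = some b := by
  match ts, hw, h with
  | [t], hw, h =>
    rw [uncomb, rootLabel_sQInv (hw t (List.mem_singleton_self t))] at h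
    exact .inr ⟨t, List.mem_singleton_self t, h⟩
  | _ :: _ :: _, _, h => exact .inl (Option.some_injective _ h).symm

end Inverse

section Comb

variable {Q : Type*} [DecidableEq Q]

theorem comb_ne_nil (a : Q) (t : STree Q) : comb a t ≠ [] := by
  cases t with
  | leaf => simp [comb]
  | node b l r => rw [comb]; split <;> simp

theorem comb_node_self (a : Q) (l r : STree Q) : comb a (.node a l r) = sQ l :: comb a r := by
  rw [comb, if_pos rfl]

theorem comb_eq_singleton {a : Q} {t : STree Q} (h : t.rootLabel ≠ some a) :
    comb a t = [sQ t] := by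
  cases t with
  | leaf => rfl
  | node b l r =>
    have hb : b ≠ a := fun hb => h (congrArg some hb)
    rw [comb, if_neg hb, sQ]

theorem rootLabel_sQ (t : STree Q) : (sQ t).rootLabel = t.rootLabel := by
  cases t <;> rfl

mutual
theorem sQInv_sQ : ∀ t : STree Q, sQInv (sQ t) = t
  | .leaf => rfl
  | .node a l r => by
    rw [sQ, sQInv, uncomb_cons a _ (comb_ne_nil a r), sQInv_sQ l, uncomb_comb a r]

theorem uncomb_comb (a : Q) : ∀ t : STree Q, uncomb a (comb a t) = t
  | .leaf => rfl
  | .node b l r => by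
    by_cases hba : b = a
    · subst hba
      rw [comb_node_self, uncomb_cons b _ (comb_ne_nil b r), sQInv_sQ l, uncomb_comb b r]
    · rw [comb, if_neg hba, uncomb, sQInv, uncomb_cons b _ (comb_ne_nil b r), sQInv_sQ l,
        uncomb_comb b r]
end

mutual
theorem schLeaves_sQ : ∀ t : STree Q, schLeaves (sQ t) = t.numLeaves
  | .leaf => rfl
  | .node a l r => by
    rw [sQ, schLeaves, schLeavesList, schLeaves_sQ l, schLeavesList_comb a r, STree.numLeaves]

theorem schLeavesList_comb (a : Q) : ∀ t : STree Q, schLeavesList (comb a t) = t.numLeaves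
  | .leaf => rfl
  | .node b l r => by
    by_cases hba : b = a
    · subst hba
      rw [comb_node_self, schLeavesList, schLeaves_sQ l, schLeavesList_comb b r,
        STree.numLeaves]
    · rw [comb, if_neg hba, schLeavesList, schLeavesList, schLeaves, schLeavesList,
        schLeaves_sQ l, schLeavesList_comb b r, STree.numLeaves, add_zero]
end

mutual
theorem schWF_sQ : ∀ t : STree Q, SchWF (sQ t)
  | .leaf => .leaf
  | .node a l r => by
    obtain ⟨c, cs, hc⟩ := List.exists_cons_of_ne_nil (comb_ne_nil a r)
    refine .node a _ (by simp [hc]) ?_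
    intro s hs
    rcases List.mem_cons.mp hs with rfl | hs
    exacts [schWF_sQ l, schWF_of_mem_comb a r s hs]

theorem schWF_of_mem_comb (a : Q) : ∀ t : STree Q, ∀ s ∈ comb a t, SchWF s
  | .leaf, s, hs => by
    rw [comb, List.mem_singleton] at hs
    exact hs ▸ .leaf
  | .node b l r, s, hs => by
    by_cases hba : b = a
    · subst hba
      rw [comb_node_self] at hs
      rcases List.mem_cons.mp hs with rfl | hs
      exacts [schWF_sQ l, schWF_of_mem_comb b r s hs]
    · rw [comb, if_neg hba, List.mem_singleton] at hs
      subst hs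
      exact schWF_sQ (.node b l r)
end

theorem comb_uncomb {a : Q} : ∀ {ts : List (SchTree Q)}, ts ≠ [] → (∀ t ∈ ts, SchWF t) →
    (∀ t ∈ ts, sQ (sQInv t) = t) → (∀ t ∈ ts, t.rootLabel ≠ some a) →
    comb a (uncomb a ts) = ts
  | [t], _, hw, hinv, hne => by
    have hroot : (sQInv t).rootLabel ≠ some a := by
      rw [rootLabel_sQInv (hw t (List.mem_singleton_self t))]
      exact hne t (List.mem_singleton_self t)
    rw [uncomb, comb_eq_singleton hroot, hinv t (List.mem_singleton_self t)]
  | t :: t' :: ts, _, hw, hinv, hne => by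
    rw [uncomb_cons a t (List.cons_ne_nil t' ts), comb_node_self, hinv t (by simp),
      comb_uncomb (List.cons_ne_nil t' ts) (fun x hx => hw x (by simp [hx]))
        (fun x hx => hinv x (by simp [hx])) (fun x hx => hne x (by simp [hx]))]

end Comb

section Order

variable {Q : Type*} [PartialOrder Q]

theorem Alt.of_mem {a : Q} {ts : List (SchTree Q)} (h : Alt (.node a ts)) {t : SchTree Q}
    (ht : t ∈ ts) : Alt t := by
  cases h with
  | node _ _ hts _ => exact hts t ht

theorem Alt.incomp_of_mem {a b : Q} {ts : List (SchTree Q)} (h : Alt (.node a ts)) {t : SchTree Q}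
    (ht : t ∈ ts) (hb : t.rootLabel = some b) : ¬ a ≤ b ∧ ¬ b ≤ a := by
  obtain ⟨cs, rfl⟩ := SchTree.rootLabel_eq_some.mp hb
  cases h with
  | node _ _ _ hinc => exact hinc b cs ht

theorem normalShape_uncomb {a : Q} : ∀ {ts : List (SchTree Q)}, (∀ t ∈ ts, SchWF t) →
    (∀ t ∈ ts, NormalShape (sQInv t)) →
    (∀ t ∈ ts, ∀ b, t.rootLabel = some b → ¬ a ≤ b ∧ ¬ b ≤ a) →
    NormalShape (uncomb a ts)
  | [], _, _, _ => trivial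
  | [t], _, hN, _ => hN t (List.mem_singleton_self t)
  | t :: t' :: ts, hw, hN, hinc => by
    have hw' : ∀ x ∈ t' :: ts, SchWF x := fun x hx => hw x (by simp [hx])
    rw [uncomb_cons a t (List.cons_ne_nil t' ts)]
    refine ⟨hN t (by simp), normalShape_uncomb hw' (fun x hx => hN x (by simp [hx]))
      (fun x hx => hinc x (by simp [hx])), fun b hb => ?_, fun b hb => ?_⟩
    · rw [rootLabel_sQInv (hw t (by simp))] at hb
      exact hinc t (by simp) b hb
    · rcases rootLabel_uncomb hw' hb with rfl | ⟨x, hx, hxb⟩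
      exacts [.inl rfl, .inr (hinc x (by simp [hx]) b hxb)]

theorem normalShape_sQInv : ∀ {s : SchTree Q}, SchWF s → Alt s → NormalShape (sQInv s)
  | .leaf, _, _ => trivial
  | .node _ _, .node _ _ _ hw, ha =>
    normalShape_uncomb hw (fun t ht => normalShape_sQInv (hw t ht) (ha.of_mem ht))
      (fun _ ht _ hb => ha.incomp_of_mem ht hb)

variable [DecidableEq Q]

theorem incomp_of_mem_comb {a : Q} : ∀ {t : STree Q}, NormalShape t →
    (∀ b, t.rootLabel = some b → b = a ∨ (¬ a ≤ b ∧ ¬ b ≤ a)) →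
    ∀ b cs, SchTree.node b cs ∈ comb a t → ¬ a ≤ b ∧ ¬ b ≤ a
  | .leaf, _, _, b, cs, h => by simp [comb] at h
  | .node c l r, ⟨_, hr, hl_inc, hr_root⟩, hroot, b, cs, h => by
    by_cases hca : c = a
    · subst hca
      rw [comb_node_self] at h
      rcases List.mem_cons.mp h with h | h
      · exact hl_inc b (by rw [← rootLabel_sQ, ← h]; rfl)
      · exact incomp_of_mem_comb hr hr_root b cs h
    · rw [comb, if_neg hca, List.mem_singleton, SchTree.node.injEq] at h
      obtain ⟨rfl, -⟩ := h
      exact (hroot b rfl).resolve_left hca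

mutual
theorem alt_sQ : ∀ {t : STree Q}, NormalShape t → Alt (sQ t)
  | .leaf, _ => .leaf
  | .node a l r, ⟨hl, hr, hl_inc, hr_root⟩ => by
    refine .node a _ ?_ ?_
    · intro s hs
      rcases List.mem_cons.mp hs with rfl | hs
      exacts [alt_sQ hl, alt_of_mem_comb a hr s hs]
    · intro b cs hs
      rcases List.mem_cons.mp hs with h | h
      · exact hl_inc b (by rw [← rootLabel_sQ, ← h]; rfl)
      · exact incomp_of_mem_comb hr hr_root b cs h

theorem alt_of_mem_comb (a : Q) : ∀ {t : STree Q}, NormalShape t → ∀ s ∈ comb a t, Alt s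
  | .leaf, _, s, hs => by
    rw [comb, List.mem_singleton] at hs
    exact hs ▸ .leaf
  | .node b l r, ht, s, hs => by
    by_cases hba : b = a
    · subst hba
      rw [comb_node_self] at hs
      rcases List.mem_cons.mp hs with rfl | hs
      exacts [alt_sQ ht.1, alt_of_mem_comb b ht.2.1 s hs]
    · rw [comb, if_neg hba, ← sQ, List.mem_singleton] at hs
      exact hs ▸ alt_sQ ht
end

theorem sQ_sQInv : ∀ {s : SchTree Q}, SchWF s → Alt s → sQ (sQInv s) = s
  | .leaf, _, _ => rfl
  | .node a ts, .node _ _ hlen hw, ha => by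
    have hts : ∀ t ∈ ts, sQ (sQInv t) = t := fun t ht =>
      sQ_sQInv (hw t ht) (ha.of_mem ht)
    match ts, hlen, hw, hts with
    | t :: t' :: ts, _, hw, hts =>
      have hne : ∀ x ∈ t' :: ts, x.rootLabel ≠ some a := fun x hx hxa =>
        (ha.incomp_of_mem (by simp [hx]) hxa).1 le_rfl
      rw [sQInv, uncomb_cons a t (List.cons_ne_nil t' ts), sQ, hts t (by simp),
        comb_uncomb (List.cons_ne_nil t' ts) (fun x hx => hw x (by simp [hx]))
          (fun x hx => hts x (by simp [hx])) hne]

end Order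

/-- For every `n ≥ 1`, the map `s_Q` is a bijection from the set `N(Q)(n)` of syntax
trees with `n` leaves of normal shape onto the set of `Q`-alternating Schröder trees
with `n` leaves. -/
theorem sQ_bijection {Q : Type*} [Fintype Q] [DecidableEq Q] [PartialOrder Q]
    (n : ℕ) (hn : 1 ≤ n) :
    Set.BijOn sQ {t : STree Q | NormalShape t ∧ t.numLeaves = n}
      {s : SchTree Q | SchWF s ∧ Alt s ∧ schLeaves s = n} := by
  refine ⟨fun t ⟨ht, hnt⟩ => ⟨schWF_sQ t, alt_sQ ht, (schLeaves_sQ t).trans hnt⟩,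
    (Function.LeftInverse.injective (g := sQInv) sQInv_sQ).injOn, ?_⟩
  rintro s ⟨hw, ha, hns⟩
  have hs : sQ (sQInv s) = s := sQ_sQInv hw ha
  refine ⟨sQInv s, ⟨normalShape_sQInv hw ha, ?_⟩, hs⟩
  rw [← schLeaves_sQ, hs, hns]
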